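/- arXiv:2212.04302 — 2 statements merged into one kernel-verified Lean document; each statement's English description precedes it below -/
import Mathlib

section
/- For every real p with 0 ≤ p ≤ 1 and natural number N ≥ 1, ∑_{k=0}^{N-1} C(N+k-1, k) · (p^N · (1-p)^k + (1-p)^N · p^k) = 1. -/
open Finset

private lemma gosper_tail (p : ℝ) (n : ℕ) : ∀ m : ℕ,
    ∑ k ∈ range m, ((n + k).choose k : ℝ) * (p ^ (n+1) * (1 - p) ^ k)
      = ∑ j ∈ Ico (n+1) (n+1+m), ((n + m).choose j : ℝ) * p ^ j * (1 - p) ^ (n + m - j) := by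
  intro m
  induction m with
  | zero => simp
  | succ m ih =>
    set q := 1 - p with hq
    have hpq : p + q = 1 := by rw [hq]; ring
    rw [Finset.sum_range_succ, ih]
    rw [Finset.sum_Ico_eq_sum_range, Finset.sum_Ico_eq_sum_range]
    have h1 : n + 1 + m - (n + 1) = m := by omega
    have h2 : n + 1 + (m+1) - (n + 1) = m + 1 := by omega
    rw [h1, h2]
    have pascal : ∀ i, ((n + (m+1)).choose (n + 1 + i) : ℝ)
        = ((n + m).choose (n + i) : ℝ) + ((n + m).choose (n + 1 + i) : ℝ) := by
      intro i
      rw [show n + (m+1) = (n + m) + 1 by omega, show n + 1 + i = (n + i) + 1 by omega]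
      rw [Nat.choose_succ_succ' (n+m) (n+i)]
      push_cast
      ring
    have expand : ∑ i ∈ range (m+1), ((n + (m+1)).choose (n + 1 + i) : ℝ) * p ^ (n + 1 + i) * q ^ (n + (m+1) - (n + 1 + i))
        = (∑ i ∈ range (m+1), ((n + m).choose (n + i) : ℝ) * p ^ (n + 1 + i) * q ^ (m - i))
          + ∑ i ∈ range m, ((n + m).choose (n + 1 + i) : ℝ) * p ^ (n + 1 + i) * q ^ (m - i) := by
      have step1 : ∑ i ∈ range (m+1), ((n + (m+1)).choose (n + 1 + i) : ℝ) * p ^ (n + 1 + i) * q ^ (n + (m+1) - (n + 1 + i))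
          = ∑ i ∈ range (m+1), (((n + m).choose (n + i) : ℝ) * p ^ (n + 1 + i) * q ^ (m - i)
            + ((n + m).choose (n + 1 + i) : ℝ) * p ^ (n + 1 + i) * q ^ (m - i)) := by
        refine Finset.sum_congr rfl fun i hi => ?_
        rw [pascal, show n + (m+1) - (n+1+i) = m - i by omega]
        ring
      rw [step1, Finset.sum_add_distrib]
      congr 1
      rw [Finset.sum_range_succ]
      have : ((n + m).choose (n + 1 + m) : ℝ) = 0 := by
        norm_cast
        exact Nat.choose_eq_zero_of_lt (by omega)
      rw [this]
      ring
    rw [expand]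
    -- peel the first sum
    have peel : ∑ i ∈ range (m+1), ((n + m).choose (n + i) : ℝ) * p ^ (n + 1 + i) * q ^ (m - i)
        = ((n + m).choose m : ℝ) * p ^ (n+1) * q ^ m
          + ∑ i ∈ range m, ((n + m).choose (n + 1 + i) : ℝ) * p ^ (n + 2 + i) * q ^ (m - 1 - i) := by
      rw [Finset.sum_range_succ']
      have h0 : ((n + m).choose (n + 0) : ℝ) = ((n + m).choose m : ℝ) := by
        norm_cast
        rw [Nat.add_zero]
        rw [← Nat.choose_symm (Nat.le_add_left m n)]
        congr 1
        omega
      rw [h0]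
      have hterm : ∀ i ∈ range m, ((n + m).choose (n + (i+1)) : ℝ) * p ^ (n + 1 + (i+1)) * q ^ (m - (i+1))
          = ((n + m).choose (n + 1 + i) : ℝ) * p ^ (n + 2 + i) * q ^ (m - 1 - i) := by
        intro i hi
        rw [show n + (i+1) = n + 1 + i by omega, show n + 1 + (i+1) = n + 2 + i by omega,
          show m - (i+1) = m - 1 - i by omega]
      rw [Finset.sum_congr rfl hterm]
      simp only [Nat.sub_zero]
      ring
    rw [peel]
    -- now expand LHS sum using p + q = 1
    have split : ∀ i ∈ range m, ((n + m).choose (n + 1 + i) : ℝ) * p ^ (n + 1 + i) * q ^ (n + m - (n + 1 + i))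
        = ((n + m).choose (n + 1 + i) : ℝ) * p ^ (n + 2 + i) * q ^ (m - 1 - i)
          + ((n + m).choose (n + 1 + i) : ℝ) * p ^ (n + 1 + i) * q ^ (m - i) := by
      intro i hi
      have him : i < m := Finset.mem_range.mp hi
      rw [show n + m - (n + 1 + i) = m - 1 - i by omega]
      have e2 : q ^ (m - i) = q ^ (m - 1 - i) * q := by
        rw [← pow_succ, show m - 1 - i + 1 = m - i by omega]
      have e3 : p ^ (n + 2 + i) = p ^ (n + 1 + i) * p := by
        rw [← pow_succ, show n + 1 + i + 1 = n + 2 + i by omega]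
      rw [e2, e3]
      have : ((n + m).choose (n + 1 + i) : ℝ) * p ^ (n + 1 + i) * q ^ (m - 1 - i)
          = ((n + m).choose (n + 1 + i) : ℝ) * p ^ (n + 1 + i) * q ^ (m - 1 - i) * (p + q) := by
        rw [hpq]; ring
      rw [this]
      ring
    rw [Finset.sum_congr rfl split, Finset.sum_add_distrib]
    ring

theorem gosper_identity (p : ℝ) (hp0 : 0 ≤ p) (hp1 : p ≤ 1) (N : ℕ) (hN : 1 ≤ N) :
    ∑ k ∈ range N, ((N + k - 1).choose k : ℝ) *
      (p ^ N * (1 - p) ^ k + (1 - p) ^ N * p ^ k) = 1 := by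
  obtain ⟨n, rfl⟩ : ∃ n, N = n + 1 := ⟨N - 1, by omega⟩
  set q := 1 - p with hq
  have hchoose : ∀ k, ((n + 1 + k - 1).choose k : ℝ) = ((n + k).choose k : ℝ) := by
    intro k
    have : n + 1 + k - 1 = n + k := by omega
    rw [this]
  have hsplit : ∑ k ∈ range (n+1), ((n + 1 + k - 1).choose k : ℝ) *
      (p ^ (n+1) * q ^ k + q ^ (n+1) * p ^ k)
      = (∑ k ∈ range (n+1), ((n + k).choose k : ℝ) * (p ^ (n+1) * q ^ k))
        + ∑ k ∈ range (n+1), ((n + k).choose k : ℝ) * (q ^ (n+1) * p ^ k) := by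
    rw [← Finset.sum_add_distrib]
    refine Finset.sum_congr rfl fun k hk => ?_
    rw [hchoose k]; ring
  rw [hsplit]
  have hA := gosper_tail p n (n+1)
  have hB := gosper_tail q n (n+1)
  have hqq : 1 - q = p := by rw [hq]; ring
  rw [hqq] at hB
  rw [hA, hB]
  -- transform the q-tail into the head of the binomial sum
  have hhead : ∑ j ∈ Ico (n+1) (n+1+(n+1)), ((n + (n+1)).choose j : ℝ) * q ^ j * p ^ (n + (n+1) - j)
      = ∑ j ∈ range (n+1), ((n + (n+1)).choose j : ℝ) * p ^ j * q ^ (n + (n+1) - j) := by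
    rw [Finset.sum_Ico_eq_sum_range]
    rw [show n + 1 + (n+1) - (n+1) = n + 1 by omega]
    rw [← Finset.sum_range_reflect (fun j => ((n + (n+1)).choose j : ℝ) * p ^ j * q ^ (n + (n+1) - j)) (n+1)]
    refine Finset.sum_congr rfl fun i hi => ?_
    have him : i < n + 1 := Finset.mem_range.mp hi
    have hc : (n + (n+1)).choose (n + 1 - 1 - i) = (n + (n+1)).choose (n + 1 + i) := by
      rw [show n + 1 - 1 - i = n + (n+1) - (n + 1 + i) by omega]
      exact Nat.choose_symm (by omega)
    rw [hc, show n + (n+1) - (n + 1 - 1 - i) = n + 1 + i by omega,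
      show n + 1 - 1 - i = n - i by omega, show n + (n+1) - (n + 1 + i) = n - i by omega]
    ring
  rw [hhead]
  have hjoin : ∑ j ∈ range (n+1), ((n + (n+1)).choose j : ℝ) * p ^ j * q ^ (n + (n+1) - j)
      + ∑ j ∈ Ico (n+1) (n+1+(n+1)), ((n + (n+1)).choose j : ℝ) * p ^ j * q ^ (n + (n+1) - j)
      = ∑ j ∈ range (2*n+2), ((n + (n+1)).choose j : ℝ) * p ^ j * q ^ (n + (n+1) - j) := by
    rw [Finset.range_eq_Ico, Finset.range_eq_Ico, show 2*n+2 = n + 1 + (n+1) by omega]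
    exact Finset.sum_Ico_consecutive (fun j => ((n + (n+1)).choose j : ℝ) * p ^ j * q ^ (n + (n+1) - j)) (by omega : 0 ≤ n + 1) (by omega : n + 1 ≤ n + 1 + (n+1))
  rw [add_comm (∑ j ∈ Ico (n+1) (n+1+(n+1)), _), hjoin]
  have hbin : (p + q) ^ (2*n+1) = ∑ j ∈ range (2*n+2), ((n + (n+1)).choose j : ℝ) * p ^ j * q ^ (n + (n+1) - j) := by
    rw [add_pow]
    refine Finset.sum_congr rfl fun j hj => ?_
    rw [show (2*n+1 : ℕ) - j = n + (n+1) - j by omega, show (2*n+1 : ℕ).choose j = (n + (n+1)).choose j by congr 1; omega]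
    ring
  rw [← hbin, hq]
  norm_num
end

section
/- Let p₁, p₂ be reals in [0, 1] and k ≥ 1, m natural numbers. Define Q(k, m) = ∑ over (a, b, j) ∈ ℕ × ℕ × {0,1} with 2a + b + j = m of C(k−1, a) · C(k−1−a, b) · (p₁ p₂^j) · (p₁ p₂)^a · (p₁(1−p₂))^b · (1−p₁)^{k−a−b−1}, where terms with a + b > k − 1 are zero. Then ∑_{k=1+⌊m/2⌋}^{N−1} Q(k, m) + ∑_{w=0}^{m} ∑_{2a+b=w} C(N−1, a) C(N−1−a, b) (p₁p₂)^a (p₁(1−p₂))^b (1−p₁)^{N−a−b−1} = 1 for all 0 ≤ p₁, p₂ ≤ 1, N ≥ 2, and m ≤ 2(N−2). -/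
open Finset Polynomial

noncomputable def tnP (p q z : ℝ) : Polynomial ℝ := C z + C q * X + C p * X^2

def coefr (p q z : ℝ) (k a b : ℕ) : ℝ :=
  (k.choose a : ℝ) * ((k - a).choose b : ℝ) * p ^ a * q ^ b * z ^ (k - a - b)

lemma term_eq (p q z : ℝ) (k a b : ℕ) :
    (C p * X^2)^a * ((C q * X)^b * (C z)^(k-a-b) * (C ((k-a).choose b : ℝ))) * (C ((k.choose a : ℝ)))
    = C (coefr p q z k a b) * X^(2*a+b) := by
  simp only [coefr, mul_pow, ← C_pow, C_mul, ← pow_mul]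
  ring

lemma coeff_pow (p q z : ℝ) (k w : ℕ) :
    ((tnP p q z)^k).coeff w
    = ∑ a ∈ range (k+1), ∑ b ∈ range (k-a+1),
        if 2*a+b = w then coefr p q z k a b else 0 := by
  have h1 : (tnP p q z)^k
      = ∑ a ∈ range (k+1), ∑ b ∈ range (k-a+1),
          C (coefr p q z k a b) * X^(2*a+b) := by
    have : tnP p q z = C p * X^2 + (C q * X + C z) := by unfold tnP; ring
    rw [this, add_pow]
    refine Finset.sum_congr rfl fun a _ => ?_
    rw [add_pow]
    rw [Finset.mul_sum, Finset.sum_mul]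
    refine Finset.sum_congr rfl fun b _ => ?_
    rw [← term_eq p q z k a b]
    simp only [← Polynomial.C_eq_natCast]
  rw [h1]
  rw [finset_sum_coeff]
  refine Finset.sum_congr rfl fun a _ => ?_
  rw [finset_sum_coeff]
  refine Finset.sum_congr rfl fun b _ => ?_
  rw [coeff_C_mul, coeff_X_pow]
  by_cases h : 2*a+b = w
  · simp [h]
  · have h' : ¬ (w = 2*a+b) := fun hh => h hh.symm
    simp [h, h']

lemma coeff_pow' (p q z : ℝ) (k w n : ℕ) (hw : w < n) :
    ((tnP p q z)^k).coeff w
    = ∑ a ∈ range n, ∑ b ∈ range n, if 2*a+b = w then coefr p q z k a b else 0 := by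
  rw [coeff_pow]
  have hzero : ∀ a b : ℕ, k < a ∨ k - a < b →
      (if 2*a+b = w then coefr p q z k a b else 0) = 0 := by
    intro a b h
    have hc : coefr p q z k a b = 0 := by
      unfold coefr
      rcases h with h | h
      · rw [Nat.choose_eq_zero_of_lt h]; ring
      · rw [Nat.choose_eq_zero_of_lt h]; ring
    simp [hc]
  have step1 : ∀ a ∈ range (k+1),
      (∑ b ∈ range (k-a+1), if 2*a+b = w then coefr p q z k a b else 0)
      = ∑ b ∈ range (k+n+1), if 2*a+b = w then coefr p q z k a b else 0 := by
    intro a _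
    refine Finset.sum_subset (Finset.range_subset_range.2 (by omega)) ?_
    intro b _ hb
    exact hzero a b (Or.inr (by simpa using hb))
  rw [Finset.sum_congr rfl step1]
  have step2 : (∑ a ∈ range (k+1), ∑ b ∈ range (k+n+1),
        if 2*a+b = w then coefr p q z k a b else 0)
      = ∑ a ∈ range (k+n+1), ∑ b ∈ range (k+n+1),
        if 2*a+b = w then coefr p q z k a b else 0 := by
    refine Finset.sum_subset (Finset.range_subset_range.2 (by omega)) ?_
    intro a _ ha
    exact Finset.sum_eq_zero fun b _ => hzero a b (Or.inl (by simpa using ha))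
  rw [step2, ← Finset.sum_product', ← Finset.sum_product']
  refine (Finset.sum_subset ?_ ?_).symm
  · exact Finset.product_subset_product (Finset.range_subset_range.2 (by omega))
      (Finset.range_subset_range.2 (by omega))
  · intro x hx hxs
    by_cases hc : 2*x.1 + x.2 = w
    · exfalso
      apply hxs
      simp only [Finset.mem_product, Finset.mem_range]
      omega
    · exact if_neg hc

lemma coeff_rec (p q z : ℝ) (k w : ℕ) :
    ((tnP p q z)^(k+1)).coeff w
    = z * ((tnP p q z)^k).coeff w
      + q * (if 1 ≤ w then ((tnP p q z)^k).coeff (w-1) else 0)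
      + p * (if 2 ≤ w then ((tnP p q z)^k).coeff (w-2) else 0) := by
  have h : (tnP p q z)^(k+1)
      = (tnP p q z)^k * C z + ((tnP p q z)^k * C q) * X^1
        + ((tnP p q z)^k * C p) * X^2 := by
    rw [pow_succ]; unfold tnP; ring
  rw [h, coeff_add, coeff_add, coeff_mul_C, coeff_mul_X_pow', coeff_mul_X_pow',
    coeff_mul_C, coeff_mul_C]
  by_cases h1 : 1 ≤ w <;> by_cases h2 : 2 ≤ w <;> simp [h1, h2] <;> ring

lemma sum_ite_shift (c : ℕ → ℝ) (j : ℕ) : ∀ n : ℕ,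
    (∑ w ∈ range n, if j ≤ w then c (w - j) else 0) = ∑ i ∈ range (n - j), c i := by
  intro n
  induction n with
  | zero => simp
  | succ n ih =>
    rw [Finset.sum_range_succ, ih]
    by_cases h : j ≤ n
    · rw [if_pos h]
      have e : n + 1 - j = (n - j) + 1 := by omega
      rw [e, Finset.sum_range_succ]
    · rw [if_neg h, add_zero]
      have e : n + 1 - j = n - j := by omega
      rw [e]

lemma tele (p q z : ℝ) (hz : z = 1 - p - q) (k m : ℕ) :
    (∑ w ∈ range (m+1), ((tnP p q z)^k).coeff w)
    - (∑ w ∈ range (m+1), ((tnP p q z)^(k+1)).coeff w)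
    = (q + p) * ((tnP p q z)^k).coeff m
      + p * (if 1 ≤ m then ((tnP p q z)^k).coeff (m-1) else 0) := by
  have h2 : (∑ w ∈ range (m+1), ((tnP p q z)^(k+1)).coeff w)
      = z * (∑ w ∈ range (m+1), ((tnP p q z)^k).coeff w)
        + q * (∑ i ∈ range ((m+1)-1), ((tnP p q z)^k).coeff i)
        + p * (∑ i ∈ range ((m+1)-2), ((tnP p q z)^k).coeff i) := by
    rw [Finset.sum_congr rfl (fun w _ => coeff_rec p q z k w),
      Finset.sum_add_distrib, Finset.sum_add_distrib, ← Finset.mul_sum, ← Finset.mul_sum,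
      ← Finset.mul_sum, sum_ite_shift, sum_ite_shift]
  rw [h2, hz]
  rcases Nat.eq_zero_or_pos m with hm | hm
  · subst hm
    simp [Finset.sum_range_succ]
    ring
  · obtain ⟨n, rfl⟩ : ∃ n, m = n + 1 := ⟨m - 1, by omega⟩
    have e1 : n + 1 + 1 - 1 = n + 1 := by omega
    have e2 : n + 1 + 1 - 2 = n := by omega
    rw [e1, e2, if_pos (by omega : 1 ≤ n + 1)]
    simp only [Finset.sum_range_succ, Nat.add_sub_cancel]
    ring

lemma second_sum (p₁ p₂ : ℝ) (N m : ℕ) :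
    (∑ w ∈ range (m + 1),
      ∑ x ∈ ((range (m + 1)) ×ˢ (range (m + 1))).filter (fun x => 2 * x.1 + x.2 = w),
        ((N - 1).choose x.1 : ℝ) * ((N - 1 - x.1).choose x.2 : ℝ) *
          (p₁ * p₂) ^ x.1 * (p₁ * (1 - p₂)) ^ x.2 * (1 - p₁) ^ (N - x.1 - x.2 - 1))
    = ∑ w ∈ range (m+1), ((tnP (p₁*p₂) (p₁*(1-p₂)) (1-p₁))^(N-1)).coeff w := by
  refine Finset.sum_congr rfl fun w hw => ?_
  rw [coeff_pow' _ _ _ _ _ (m+1) (Finset.mem_range.1 hw)]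
  rw [Finset.sum_filter, Finset.sum_product]
  refine Finset.sum_congr rfl fun a _ => Finset.sum_congr rfl fun b _ => ?_
  unfold coefr
  have e : N - a - b - 1 = N - 1 - a - b := by omega
  rw [e]

lemma first_inner (p₁ p₂ : ℝ) (m i : ℕ) :
    (∑ x ∈ ((range (m + 1)) ×ˢ (range (m + 1)) ×ˢ (range 2)).filter
          (fun x => 2 * x.1 + x.2.1 + x.2.2 = m),
        ((i).choose x.1 : ℝ) * ((i - x.1).choose x.2.1 : ℝ) *
          (p₁ * p₂ ^ x.2.2) * (p₁ * p₂) ^ x.1 * (p₁ * (1 - p₂)) ^ x.2.1 *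
            (1 - p₁) ^ (i - x.1 - x.2.1))
    = (∑ w ∈ range (m+1), ((tnP (p₁*p₂) (p₁*(1-p₂)) (1-p₁))^i).coeff w)
      - (∑ w ∈ range (m+1), ((tnP (p₁*p₂) (p₁*(1-p₂)) (1-p₁))^(i+1)).coeff w) := by
  set p := p₁*p₂ with hp
  set q := p₁*(1-p₂) with hq
  set z := 1-p₁ with hzdef
  rw [tele p q z (by rw [hp, hq, hzdef]; ring) i m]
  rw [Finset.sum_filter, Finset.sum_product]
  have hsplit : ∀ a ∈ range (m+1),
      (∑ y ∈ (range (m + 1)) ×ˢ (range 2),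
        if 2 * a + y.1 + y.2 = m then
          ((i).choose a : ℝ) * ((i - a).choose y.1 : ℝ) *
          (p₁ * p₂ ^ y.2) * p ^ a * q ^ y.1 * z ^ (i - a - y.1) else 0)
      = (∑ b ∈ range (m+1),
          if 2 * a + b = m then
            (q + p) * coefr p q z i a b else 0)
        + (∑ b ∈ range (m+1),
          if 2 * a + b + 1 = m then
            p * coefr p q z i a b else 0) := by
    intro a _
    rw [Finset.sum_product, ← Finset.sum_add_distrib]
    refine Finset.sum_congr rfl fun b _ => ?_
    rw [Finset.sum_range_succ, Finset.sum_range_one]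
    congr 1
    · by_cases hc : 2*a+b = m
      · rw [if_pos (by omega), if_pos hc]
        unfold coefr
        rw [hp, hq]
        ring
      · rw [if_neg (by omega), if_neg hc]
    · by_cases hc : 2*a+b+1 = m
      · rw [if_pos (by omega), if_pos hc]
        unfold coefr
        rw [hp]
        ring
      · rw [if_neg (by omega), if_neg hc]
  rw [Finset.sum_congr rfl hsplit, Finset.sum_add_distrib]
  congr 1
  · rw [coeff_pow' p q z i m (m+1) (by omega), Finset.mul_sum]
    refine Finset.sum_congr rfl fun a _ => ?_
    rw [Finset.mul_sum]
    refine Finset.sum_congr rfl fun b _ => ?_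
    by_cases hc : 2*a+b = m
    · rw [if_pos hc, if_pos hc]
    · rw [if_neg hc, if_neg hc, mul_zero]
  · rcases Nat.eq_zero_or_pos m with hm | hm
    · subst hm
      rw [if_neg (by omega)]
      simp
    · rw [if_pos (show 1 ≤ m by omega), coeff_pow' p q z i (m-1) (m+1) (by omega), Finset.mul_sum]
      refine Finset.sum_congr rfl fun a _ => ?_
      rw [Finset.mul_sum]
      refine Finset.sum_congr rfl fun b _ => ?_
      by_cases hc : 2*a+b+1 = m
      · rw [if_pos hc, if_pos (by omega)]
      · rw [if_neg hc, if_neg (by omega), mul_zero]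

theorem two_node_chain (p₁ p₂ : ℝ) (h10 : 0 ≤ p₁) (h11 : p₁ ≤ 1) (h20 : 0 ≤ p₂)
    (h21 : p₂ ≤ 1) (N m : ℕ) (hN : 2 ≤ N) (hm : m ≤ 2 * (N - 2)) :
    (∑ k ∈ Icc (1 + m / 2) (N - 1),
      ∑ x ∈ ((range (m + 1)) ×ˢ (range (m + 1)) ×ˢ (range 2)).filter
          (fun x => 2 * x.1 + x.2.1 + x.2.2 = m),
        ((k - 1).choose x.1 : ℝ) * ((k - 1 - x.1).choose x.2.1 : ℝ) *
          (p₁ * p₂ ^ x.2.2) * (p₁ * p₂) ^ x.1 * (p₁ * (1 - p₂)) ^ x.2.1 *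
            (1 - p₁) ^ (k - x.1 - x.2.1 - 1)) +
    (∑ w ∈ range (m + 1),
      ∑ x ∈ ((range (m + 1)) ×ˢ (range (m + 1))).filter (fun x => 2 * x.1 + x.2 = w),
        ((N - 1).choose x.1 : ℝ) * ((N - 1 - x.1).choose x.2 : ℝ) *
          (p₁ * p₂) ^ x.1 * (p₁ * (1 - p₂)) ^ x.2 * (1 - p₁) ^ (N - x.1 - x.2 - 1)) = 1 := by
  set p := p₁*p₂ with hp
  set q := p₁*(1-p₂) with hq
  set z := 1-p₁ with hzdef
  -- extend the Icc
  have hvanish : ∀ k ∈ Icc 1 (N-1), k ∉ Icc (1 + m / 2) (N - 1) →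
      (∑ x ∈ ((range (m + 1)) ×ˢ (range (m + 1)) ×ˢ (range 2)).filter
          (fun x => 2 * x.1 + x.2.1 + x.2.2 = m),
        ((k - 1).choose x.1 : ℝ) * ((k - 1 - x.1).choose x.2.1 : ℝ) *
          (p₁ * p₂ ^ x.2.2) * (p₁ * p₂) ^ x.1 * (p₁ * (1 - p₂)) ^ x.2.1 *
            (1 - p₁) ^ (k - x.1 - x.2.1 - 1)) = 0 := by
    intro k hk hk'
    have hk1 : 1 ≤ k := (Finset.mem_Icc.1 hk).1
    have hk2 : k ≤ N - 1 := (Finset.mem_Icc.1 hk).2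
    have hkm : k < 1 + m / 2 := by
      by_contra h
      exact hk' (Finset.mem_Icc.2 ⟨by omega, hk2⟩)
    refine Finset.sum_eq_zero fun x hx => ?_
    obtain ⟨hxmem, hxc⟩ := Finset.mem_filter.1 hx
    obtain ⟨hx1, hx2⟩ := Finset.mem_product.1 hxmem
    obtain ⟨hx21, hx22⟩ := Finset.mem_product.1 hx2
    have hj : x.2.2 < 2 := Finset.mem_range.1 hx22
    by_cases hA : k - 1 < x.1
    · have : ((k-1).choose x.1 : ℝ) = 0 := by
        rw [Nat.choose_eq_zero_of_lt hA]; norm_num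
      rw [this]; ring
    · by_cases hB : k - 1 - x.1 < x.2.1
      · have : ((k-1-x.1).choose x.2.1 : ℝ) = 0 := by
          rw [Nat.choose_eq_zero_of_lt hB]; norm_num
        rw [this]; ring
      · exfalso; omega
  rw [Finset.sum_subset (Finset.Icc_subset_Icc (by omega) le_rfl) hvanish]
  rw [← Finset.Ico_add_one_right_eq_Icc, Finset.sum_Ico_eq_sum_range]
  have hrange : N - 1 + 1 - 1 = N - 1 := by omega
  rw [hrange, second_sum]
  have hterm : ∀ i ∈ range (N-1),
      (∑ x ∈ ((range (m + 1)) ×ˢ (range (m + 1)) ×ˢ (range 2)).filter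
          (fun x => 2 * x.1 + x.2.1 + x.2.2 = m),
        (((1+i) - 1).choose x.1 : ℝ) * (((1+i) - 1 - x.1).choose x.2.1 : ℝ) *
          (p₁ * p₂ ^ x.2.2) * (p₁ * p₂) ^ x.1 * (p₁ * (1 - p₂)) ^ x.2.1 *
            (1 - p₁) ^ ((1+i) - x.1 - x.2.1 - 1))
      = (∑ w ∈ range (m+1), ((tnP p q z)^i).coeff w)
        - (∑ w ∈ range (m+1), ((tnP p q z)^(i+1)).coeff w) := by
    intro i _
    rw [← first_inner p₁ p₂ m i]
    refine Finset.sum_congr rfl fun x hx => ?_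
    have e1 : 1 + i - 1 = i := by omega
    have e2 : 1 + i - x.1 - x.2.1 - 1 = i - x.1 - x.2.1 := by omega
    rw [e1, e2]
  rw [Finset.sum_congr rfl hterm]
  rw [Finset.sum_range_sub' (fun j => ∑ w ∈ range (m+1), ((tnP p q z)^j).coeff w) (N-1)]
  have hS0 : (∑ w ∈ range (m+1), ((tnP p q z)^0).coeff w) = 1 := by
    simp only [pow_zero, Polynomial.coeff_one]
    rw [Finset.sum_ite_eq' (range (m+1)) 0 (fun _ => (1:ℝ))]
    simp
  rw [hS0]
  ring
end
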